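/- Let J, R, Q be real n×n matrices with Jᵀ = −J, R positive semidefinite, and Q positive semidefinite, and let M denote the matrix (J − R)Q viewed as a complex n×n matrix. Then every nonzero purely imaginary eigenvalue of M is semisimple: for every λ ∈ ℂ with λ ≠ 0 and Re(λ) = 0, the generalized eigenspace ker((M − λI)ⁿ) equals the eigenspace ker(M − λI). -/

import Mathlib

/-!
Write `M = (J - R) Q` and `N = M - μ`. It suffices that `N² x = 0` forces `N x = 0`. Put
`y = N x`, an eigenvector of `M` for `μ`, and `z = Q y`. Then `z* (J - R) z = μ · y* Q y`;
the left side has real part `-z* R z` and the right side is purely imaginary, so `R z = 0`.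
Hence `J z = μ y`, which makes `z` an eigenvector of `Mᴴ` for `conj μ = -μ`, i.e. `Nᴴ z = 0`.
Therefore `y* Q y = z* N x = (Nᴴ z)* x = 0`, so `Q y = 0` and `μ y = (J - R) Q y = 0`.
-/

open Matrix

/-- The complexification of a real matrix. -/
noncomputable def toC {n : ℕ} (A : Matrix (Fin n) (Fin n) ℝ) : Matrix (Fin n) (Fin n) ℂ :=
  A.map (fun a => (a : ℂ))

open scoped ComplexOrder

namespace Matrix

lemma star_mulVec_dotProduct {ι α : Type*} [Fintype ι] [CommSemiring α] [StarRing α]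
    (N : Matrix ι ι α) (x y : ι → α) : star (N *ᵥ x) ⬝ᵥ y = star x ⬝ᵥ Nᴴ *ᵥ y := by
  rw [star_mulVec, dotProduct_mulVec]

lemma mulVec_pow_eq_zero_iff_of_ker_sq_le {ι α : Type*} [Fintype ι] [DecidableEq ι] [Semiring α]
    {N : Matrix ι ι α} (h : ∀ x, N *ᵥ (N *ᵥ x) = 0 → N *ᵥ x = 0) {k : ℕ} (hk : k ≠ 0)
    (x : ι → α) : (N ^ k) *ᵥ x = 0 ↔ N *ᵥ x = 0 := by
  induction k generalizing x with
  | zero => exact absurd rfl hk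
  | succ k ih =>
    rcases eq_or_ne k 0 with rfl | hk
    · rw [pow_one]
    · rw [pow_succ, ← mulVec_mulVec, ih hk]
      exact ⟨h x, fun hx => by rw [hx, mulVec_zero]⟩

variable {ι 𝕜 : Type*} [Fintype ι] [RCLike 𝕜]

lemma re_star_dotProduct_mulVec_self_eq_zero {J : Matrix ι ι 𝕜} (hJ : Jᴴ = -J) (z : ι → 𝕜) :
    RCLike.re (star z ⬝ᵥ J *ᵥ z) = 0 := by
  have hre := congrArg RCLike.re (star_mulVec_dotProduct J z z)
  rw [star_dotProduct, hJ, neg_mulVec, dotProduct_neg, RCLike.star_def, RCLike.conj_re,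
    map_neg] at hre
  linarith

lemma PosSemidef.mulVec_eq_zero_of_re_eq_zero {R : Matrix ι ι 𝕜} (hR : R.PosSemidef)
    {z : ι → 𝕜} (h : RCLike.re (star z ⬝ᵥ R *ᵥ z) = 0) : R *ᵥ z = 0 :=
  (hR.dotProduct_mulVec_zero_iff z).mp <|
    RCLike.ext (by simpa using h) (by simpa using hR.isHermitian.im_star_dotProduct_mulVec_self z)

variable {J R Q : Matrix ι ι 𝕜} {μ : 𝕜} {y : ι → 𝕜}

lemma mulVec_mulVec_eq_zero_of_mul_mulVec_eq_smul (hJ : Jᴴ = -J) (hR : R.PosSemidef)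
    (hQ : Q.PosSemidef) (hμ : RCLike.re μ = 0) (hy : ((J - R) * Q) *ᵥ y = μ • y) :
    R *ᵥ (Q *ᵥ y) = 0 := by
  set z := Q *ᵥ y
  have hquad : star z ⬝ᵥ J *ᵥ z - star z ⬝ᵥ R *ᵥ z = μ * (star y ⬝ᵥ Q *ᵥ y) := by
    rw [← dotProduct_sub, ← sub_mulVec, mulVec_mulVec, hy, dotProduct_smul,
      star_mulVec_dotProduct, hQ.isHermitian.eq, smul_eq_mul]
  have hre := congrArg RCLike.re hquad
  rw [map_sub, re_star_dotProduct_mulVec_self_eq_zero hJ, RCLike.mul_re, hμ,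
    hQ.isHermitian.im_star_dotProduct_mulVec_self] at hre
  exact hR.mulVec_eq_zero_of_re_eq_zero (by linarith)

lemma conjTranspose_sub_smul_one_mulVec_eq_zero [DecidableEq ι] (hJ : Jᴴ = -J)
    (hR : R.PosSemidef) (hQ : Q.PosSemidef) (hμ : RCLike.re μ = 0)
    (hy : ((J - R) * Q) *ᵥ y = μ • y) : ((J - R) * Q - μ • 1)ᴴ *ᵥ (Q *ᵥ y) = 0 := by
  have hRz := mulVec_mulVec_eq_zero_of_mul_mulVec_eq_smul hJ hR hQ hμ hy
  have hJz : J *ᵥ (Q *ᵥ y) = μ • y := by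
    rwa [← mulVec_mulVec, sub_mulVec, hRz, sub_zero] at hy
  have hμ_conj : star μ = -μ := RCLike.ext (by simp [hμ]) (by simp)
  rw [conjTranspose_sub, conjTranspose_mul, conjTranspose_sub, hJ, hR.isHermitian.eq,
    hQ.isHermitian.eq, conjTranspose_smul, conjTranspose_one, hμ_conj, sub_mulVec,
    ← mulVec_mulVec, sub_mulVec, neg_mulVec, hJz, hRz, sub_zero, mulVec_neg, mulVec_smul,
    neg_smul, neg_mulVec, Matrix.smul_mulVec, one_mulVec, sub_neg_eq_add, neg_add_cancel]

lemma mulVec_eq_zero_of_mulVec_mulVec_eq_zero [DecidableEq ι] (hJ : Jᴴ = -J)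
    (hR : R.PosSemidef) (hQ : Q.PosSemidef) (hμ0 : μ ≠ 0) (hμ : RCLike.re μ = 0) {x : ι → 𝕜}
    (hx : ((J - R) * Q - μ • 1) *ᵥ (((J - R) * Q - μ • 1) *ᵥ x) = 0) :
    ((J - R) * Q - μ • 1) *ᵥ x = 0 := by
  set N := (J - R) * Q - μ • 1
  set y := N *ᵥ x
  have hy : ((J - R) * Q) *ᵥ y = μ • y := by
    rwa [sub_mulVec, Matrix.smul_mulVec, one_mulVec, sub_eq_zero] at hx
  have hquad : star y ⬝ᵥ Q *ᵥ y = 0 :=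
    calc star y ⬝ᵥ Q *ᵥ y = star (Q *ᵥ y) ⬝ᵥ N *ᵥ x := by
          rw [star_mulVec_dotProduct Q, hQ.isHermitian.eq]
      _ = star (Nᴴ *ᵥ (Q *ᵥ y)) ⬝ᵥ x := by
          rw [star_mulVec_dotProduct Nᴴ, conjTranspose_conjTranspose]
      _ = 0 := by
          rw [conjTranspose_sub_smul_one_mulVec_eq_zero hJ hR hQ hμ hy, star_zero,
            zero_dotProduct]
  have hQy : Q *ᵥ y = 0 := (hQ.dotProduct_mulVec_zero_iff y).mp hquad
  have hμy : μ • y = 0 := by rw [← hy, ← mulVec_mulVec, hQy, mulVec_zero]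
  exact (smul_eq_zero.mp hμy).resolve_left hμ0

end Matrix

section Complexification

variable {n : ℕ}

lemma toC_mul (A B : Matrix (Fin n) (Fin n) ℝ) : toC (A * B) = toC A * toC B :=
  Matrix.map_mul (f := Complex.ofRealHom)

lemma toC_sub (A B : Matrix (Fin n) (Fin n) ℝ) : toC (A - B) = toC A - toC B :=
  Matrix.map_sub _ Complex.ofReal_sub A B

lemma toC_neg (A : Matrix (Fin n) (Fin n) ℝ) : toC (-A) = -toC A :=
  Matrix.map_neg _ Complex.ofReal_neg A

lemma conjTranspose_toC (A : Matrix (Fin n) (Fin n) ℝ) : (toC A)ᴴ = toC Aᵀ :=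
  (conjTranspose_map _ fun a => (Complex.conj_ofReal a).symm).symm

lemma Matrix.PosSemidef.toC {A : Matrix (Fin n) (Fin n) ℝ} (hA : A.PosSemidef) :
    (toC A).PosSemidef := by
  open scoped MatrixOrder in
  obtain ⟨B, rfl⟩ := CStarAlgebra.nonneg_iff_eq_star_mul_self.mp hA.nonneg
  rw [toC_mul, star_eq_conjTranspose, conjTranspose_eq_transpose_of_trivial, ← conjTranspose_toC]
  exact posSemidef_conjTranspose_mul_self _

end Complexification

theorem nonzero_imaginary_eigenvalues_semisimple {n : ℕ} (J R Q : Matrix (Fin n) (Fin n) ℝ)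
    (hJ : Jᵀ = -J) (hR : R.PosSemidef) (hQ : Q.PosSemidef)
    (μ : ℂ) (hμ0 : μ ≠ 0) (hμ : μ.re = 0) :
    {x : Fin n → ℂ | ((toC ((J - R) * Q) - μ • 1) ^ n) *ᵥ x = 0} =
      {x : Fin n → ℂ | (toC ((J - R) * Q) - μ • 1) *ᵥ x = 0} := by
  have hJc : (toC J)ᴴ = -toC J := by rw [conjTranspose_toC, hJ, toC_neg]
  ext x
  rw [toC_mul, toC_sub]
  rcases eq_or_ne n 0 with rfl | hn
  · simp [Subsingleton.elim x 0]
  · exact mulVec_pow_eq_zero_iff_of_ker_sq_le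
      (fun _ => mulVec_eq_zero_of_mulVec_mulVec_eq_zero hJc hR.toC hQ.toC hμ0 hμ) hn x
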